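/- arXiv:2203.16081 — 2 statements merged into one kernel-verified Lean document; each statement's English description precedes it below -/
import Mathlib

section
/- Let m ≥ 2 divide (q+1)/2, where q is an odd prime power, and let m be odd. Write Q = ⟨ω⟩ with ω = β^{q-1} and Q_i = ω^i⟨ω^m⟩. Then Q_0 is a clique in GP(q^2,m), each Q_i with 1 ≤ i ≤ m-1 is an independent set, and for distinct i_1 < i_2 in {0,...,m-1}, every element of Q_{i_1} is adjacent to every element of Q_{i_2} if i_1 + i_2 ≡ 0 (mod m), and no element of Q_{i_1} is adjacent to any element of Q_{i_2} otherwise. -/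
/-- The coset `Q_i = ω^i ⟨ω^m⟩` of the subgroup `Q_0` of the order-`(q+1)` subgroup
`Q = ⟨ω⟩`, `ω = β^{q-1}`, viewed as a set of field elements. -/
def Qcoset (q m : ℕ) {F : Type*} [Field F] (β : Fˣ) (i : ℕ) : Set F :=
  {x | ∃ k : ℕ, x = (((β ^ (q - 1)) ^ (i + m * k) : Fˣ) : F)}

/-- Adjacency in `GP(q^2, m)`: the difference is a nonzero `m`-th power. -/
def AdjGP (m : ℕ) {F : Type*} [Field F] (x y : F) : Prop :=
  ∃ δ : Fˣ, ((δ : F)) ^ m = x - y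

/-
Every element x of Q = ⟨ω⟩ has x ^ (q + 1) = 1, so x ^ q = x⁻¹. Since x ↦ x ^ q is additive,
for distinct x = ω ^ s and y = ω ^ t the difference u = x - y satisfies
u ^ (q - 1) * ω ^ (s + t) = -1. In the cyclic group F^× an element u is an m-th power iff
u ^ ((q² - 1) / m) = 1, and (q² - 1) / m = (q - 1) * r with r = (q + 1) / m even because
2m ∣ q + 1. Hence x and y are adjacent iff ω ^ ((s + t) * r) = 1, i.e. iff m ∣ s + t.
Reading s and t modulo m gives all three claims; m odd turns m ∣ 2i into m ∣ i.
-/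

theorem IsCyclic.exists_pow_eq_iff_pow_card_div_eq_one {G : Type*} [CommGroup G] [IsCyclic G]
    [Finite G] {m : ℕ} (hm : m ∣ Nat.card G) (x : G) :
    (∃ y, y ^ m = x) ↔ x ^ (Nat.card G / m) = 1 := by
  -- both subgroups below have `Nat.card G / m` elements
  have hle : (powMonoidHom m : G →* G).range ≤ (powMonoidHom (Nat.card G / m)).ker := by
    rintro _ ⟨y, rfl⟩
    simp [← pow_mul, Nat.mul_div_cancel' hm, pow_card_eq_one']
  have hcard : Nat.card (powMonoidHom (Nat.card G / m) : G →* G).ker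
      ≤ Nat.card (powMonoidHom m : G →* G).range := by
    rw [IsCyclic.card_powMonoidHom_ker, IsCyclic.card_powMonoidHom_range,
      Nat.gcd_eq_right hm, Nat.gcd_eq_right (Nat.div_dvd_of_dvd hm)]
  have h := SetLike.ext_iff.mp (Subgroup.eq_of_le_of_card_ge hle hcard) x
  simpa using h

theorem sub_pow_mul_mul_eq_of_pow_add_one_eq_one {R : Type*} [CommRing R] {p : ℕ} [ExpChar R p]
    (n : ℕ) {x y : R} (hx : x ^ (p ^ n + 1) = 1) (hy : y ^ (p ^ n + 1) = 1) :
    (x - y) ^ p ^ n * (x * y) = y - x := by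
  rw [sub_pow_expChar_pow]
  linear_combination y * hx - x * hy

theorem adjGP_iff_exists_pow_eq {F : Type*} [Field F] {m : ℕ} {x y : F} (hxy : x ≠ y) :
    AdjGP m x y ↔ ∃ δ : Fˣ, δ ^ m = Units.mk0 (x - y) (sub_ne_zero.2 hxy) := by
  simp [AdjGP, Units.ext_iff]

section FiniteField

variable {F : Type*} [Field F] [Fintype F] {q m : ℕ}

theorem exists_pow_eq_iff_of_pow_sub_one_mul_eq_neg_one (hF : Fintype.card F = q ^ 2)
    (hm : 2 * m ∣ q + 1) {u z : Fˣ} (huz : u ^ (q - 1) * z = -1) :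
    (∃ δ : Fˣ, δ ^ m = u) ↔ z ^ ((q + 1) / m) = 1 := by
  obtain ⟨k, hk⟩ := hm
  have hm0 : m ≠ 0 := by rintro rfl; simp at hk
  have hr : (q + 1) / m = 2 * k := by
    rw [hk, mul_comm 2 m, mul_assoc, Nat.mul_div_cancel_left _ hm0.bot_lt]
  have hcard : Nat.card Fˣ = m * ((q - 1) * (2 * k)) := by
    rw [Nat.card_units, Nat.card_eq_fintype_card, hF, ← one_pow 2, Nat.sq_sub_sq, one_pow, hk]
    ring
  have hprod : (u ^ (q - 1)) ^ (2 * k) * z ^ (2 * k) = 1 := by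
    rw [← mul_pow, huz, pow_mul, neg_one_sq, one_pow]
  rw [IsCyclic.exists_pow_eq_iff_pow_card_div_eq_one (hcard ▸ dvd_mul_right _ _), hcard,
    Nat.mul_div_cancel_left _ hm0.bot_lt, pow_mul, hr]
  constructor
  · intro h; rwa [h, one_mul] at hprod
  · intro h; rwa [h, mul_one] at hprod

theorem adjGP_pow_iff {p n : ℕ} [ExpChar F p] (hF : Fintype.card F = q ^ 2) (hq : q = p ^ n)
    (hm : 2 * m ∣ q + 1) {ω : Fˣ} (hω : orderOf ω = q + 1) {s t : ℕ}
    (hst : ((ω ^ s : Fˣ) : F) ≠ ((ω ^ t : Fˣ) : F)) :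
    AdjGP m ((ω ^ s : Fˣ) : F) ((ω ^ t : Fˣ) : F) ↔ m ∣ s + t := by
  have hnorm : ∀ j : ℕ, ((ω ^ j : Fˣ) : F) ^ (q + 1) = 1 := fun j => by
    rw [← Units.val_pow_eq_pow_val, ← pow_mul, mul_comm, pow_mul, ← hω, pow_orderOf_eq_one,
      one_pow, Units.val_one]
  have hq0 : q ≠ 0 := by rintro rfl; simp at hF
  have hfrob := sub_pow_mul_mul_eq_of_pow_add_one_eq_one n (hq ▸ hnorm s) (hq ▸ hnorm t)
  rw [← hq, ← pow_sub_one_mul hq0] at hfrob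
  have hkey : (Units.mk0 _ (sub_ne_zero.2 hst)) ^ (q - 1) * ω ^ (s + t) = -1 := by
    ext
    simp only [Units.val_mul, Units.val_pow_eq_pow_val, Units.val_mk0, pow_add, Units.val_neg,
      Units.val_one] at hfrob hst ⊢
    refine mul_left_cancel₀ (sub_ne_zero.2 hst) ?_
    linear_combination hfrob
  obtain ⟨r, hr⟩ := dvd_trans (dvd_mul_left m 2) hm
  obtain ⟨hm0, hr0⟩ : 0 < m ∧ 0 < r :=
    CanonicallyOrderedAdd.mul_pos.mp (hr ▸ q.succ_pos)
  rw [adjGP_iff_exists_pow_eq hst, exists_pow_eq_iff_of_pow_sub_one_mul_eq_neg_one hF hm hkey,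
    ← pow_mul, ← orderOf_dvd_iff_pow_eq_one, hω, hr, Nat.mul_div_cancel_left _ hm0,
    Nat.mul_dvd_mul_iff_right hr0]

end FiniteField

section Qcoset

variable {F : Type*} [Field F] {q m : ℕ} {β : Fˣ}

theorem orderOf_pow_sub_one [Fintype F] (hF : Fintype.card F = q ^ 2)
    (hβ : ∀ u : Fˣ, u ∈ Subgroup.zpowers β) : orderOf (β ^ (q - 1)) = q + 1 := by
  have hq : 1 < q := by
    have := hF ▸ Fintype.one_lt_card (α := F)
    nlinarith
  have hβq : orderOf β = (q - 1) * (q + 1) := by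
    rw [orderOf_eq_card_of_forall_mem_zpowers hβ, Nat.card_units, Nat.card_eq_fintype_card, hF,
      ← one_pow 2, Nat.sq_sub_sq, one_pow, mul_comm]
  rw [orderOf_pow_of_dvd (by omega) (hβq ▸ dvd_mul_right _ _), hβq,
    Nat.mul_div_cancel_left _ (by omega)]

theorem modEq_of_mem_Qcoset (hm : m ∣ orderOf (β ^ (q - 1))) {i j : ℕ} {x : F}
    (hi : x ∈ Qcoset q m β i) (hj : x ∈ Qcoset q m β j) : i ≡ j [MOD m] := by
  obtain ⟨k, rfl⟩ := hi
  obtain ⟨l, hl⟩ := hj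
  have h := (pow_eq_pow_iff_modEq.mp (Units.ext hl)).of_dvd hm
  simpa [Nat.ModEq, Nat.add_mul_mod_self_left] using h

theorem adjGP_iff_of_mem_Qcoset [Fintype F] {p n : ℕ} [ExpChar F p]
    (hF : Fintype.card F = q ^ 2) (hq : q = p ^ n) (hm : 2 * m ∣ q + 1)
    (hω : orderOf (β ^ (q - 1)) = q + 1) {i j : ℕ} {x y : F}
    (hx : x ∈ Qcoset q m β i) (hy : y ∈ Qcoset q m β j) (hxy : x ≠ y) :
    AdjGP m x y ↔ m ∣ i + j := by
  obtain ⟨k, rfl⟩ := hx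
  obtain ⟨l, rfl⟩ := hy
  rw [adjGP_pow_iff hF hq hm hω hxy, show i + m * k + (j + m * l) = i + j + m * (k + l) by ring]
  exact Nat.dvd_add_left (dvd_mul_right _ _)

end Qcoset

theorem structure_of_Q_odd_case_general
    (q m : ℕ) (hq : ∃ p n : ℕ, p.Prime ∧ Odd p ∧ 0 < n ∧ q = p ^ n)
    (hmo : Odd m) (hdvd : m ∣ (q + 1) / 2)
    (F : Type*) [Field F] [Fintype F] (hF : Fintype.card F = q ^ 2)
    (β : Fˣ) (hβ : ∀ u : Fˣ, u ∈ Subgroup.zpowers β) :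
    (Set.Pairwise (Qcoset q m β 0) (AdjGP m)) ∧
    (∀ i : ℕ, 1 ≤ i → i ≤ m - 1 →
      ∀ x ∈ Qcoset q m β i, ∀ y ∈ Qcoset q m β i, x ≠ y → ¬ AdjGP m x y) ∧
    (∀ i₁ i₂ : ℕ, i₁ < i₂ → i₂ ≤ m - 1 →
      ((m ∣ i₁ + i₂) → ∀ x ∈ Qcoset q m β i₁, ∀ y ∈ Qcoset q m β i₂, AdjGP m x y) ∧
      (¬ (m ∣ i₁ + i₂) → ∀ x ∈ Qcoset q m β i₁, ∀ y ∈ Qcoset q m β i₂, ¬ AdjGP m x y)) := by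
  obtain ⟨p, n, hp, hpo, -, hqp⟩ := hq
  have : Fact p.Prime := ⟨hp⟩
  have : CharP F p := charP_of_card_eq_prime_pow (f := n * 2) (by rw [hF, hqp, pow_mul])
  have : ExpChar F p := ExpChar.prime hp
  have hω := orderOf_pow_sub_one hF hβ
  have h2m : 2 * m ∣ q + 1 :=
    Nat.two_mul_div_two_of_even (hqp ▸ hpo.pow).add_one ▸ mul_dvd_mul_left 2 hdvd
  have hadj : ∀ {i j : ℕ} {x y : F}, x ∈ Qcoset q m β i → y ∈ Qcoset q m β j → x ≠ y →
      (AdjGP m x y ↔ m ∣ i + j) :=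
    adjGP_iff_of_mem_Qcoset hF hqp h2m hω
  refine ⟨fun x hx y hy hxy => (hadj hx hy hxy).2 (dvd_zero m), ?_, ?_⟩
  · intro i hi hil x hx y hy hxy hxy'
    have h2i : m ∣ 2 * i := two_mul i ▸ (hadj hx hy hxy).1 hxy'
    have := Nat.le_of_dvd (by omega) ((Nat.coprime_two_right.mpr hmo).dvd_of_dvd_mul_left h2i)
    omega
  · intro i₁ i₂ hlt hle
    have hne : ∀ x ∈ Qcoset q m β i₁, ∀ y ∈ Qcoset q m β i₂, x ≠ y := by
      rintro x hx y hy rfl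
      have := modEq_of_mem_Qcoset (hω ▸ (dvd_mul_left m 2).trans h2m) hx hy
      rw [Nat.ModEq, Nat.mod_eq_of_lt (by omega), Nat.mod_eq_of_lt (by omega)] at this
      omega
    exact ⟨fun h x hx y hy => (hadj hx hy (hne x hx y hy)).2 h,
      fun h x hx y hy => mt (hadj hx hy (hne x hx y hy)).1 h⟩

/-- For odd `m ≥ 2` dividing `(q+1)/2`: `Q_0` is a clique in `GP(q^2,m)`,
each `Q_i` (`1 ≤ i ≤ m-1`) is independent, and for `i₁ < i₂ ≤ m-1` all edges between
`Q_{i₁}` and `Q_{i₂}` are present if `m ∣ i₁+i₂` and none otherwise. -/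
theorem structure_of_Q_odd_case
    (q m : ℕ) (hq : ∃ p n : ℕ, p.Prime ∧ Odd p ∧ 0 < n ∧ q = p ^ n)
    (hm : 2 ≤ m) (hmo : Odd m) (hdvd : m ∣ (q + 1) / 2)
    (F : Type*) [Field F] [Fintype F] (hF : Fintype.card F = q ^ 2)
    (β : Fˣ) (hβ : ∀ u : Fˣ, u ∈ Subgroup.zpowers β) :
    (Set.Pairwise (Qcoset q m β 0) (AdjGP m)) ∧
    (∀ i : ℕ, 1 ≤ i → i ≤ m - 1 →
      ∀ x ∈ Qcoset q m β i, ∀ y ∈ Qcoset q m β i, x ≠ y → ¬ AdjGP m x y) ∧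
    (∀ i₁ i₂ : ℕ, i₁ < i₂ → i₂ ≤ m - 1 →
      ((m ∣ i₁ + i₂) → ∀ x ∈ Qcoset q m β i₁, ∀ y ∈ Qcoset q m β i₂, AdjGP m x y) ∧
      (¬ (m ∣ i₁ + i₂) → ∀ x ∈ Qcoset q m β i₁, ∀ y ∈ Qcoset q m β i₂, ¬ AdjGP m x y)) :=
  structure_of_Q_odd_case_general q m hq hmo hdvd F hF β hβ
end

section
/- Let r be an odd prime power, q = r^3, and m = r^2 - r + 1. Then m divides q + 1, m divides (r^6 - 1)/(r^2 - 1), and consequently every nonzero element of the subfield F_{r^2} of F_{q^2} = F_{r^6} is an m-th power in F_{q^2}^*; in particular the subfield F_{r^2} forms a clique in GP(q^2, m). -/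
/-!
Writing `m = r² - r + 1`, the identities `(r + 1) m = r³ + 1` and
`r⁶ - 1 = (r² - 1) m (r² + r + 1)` give the two divisibilities. The elements of `F_{r²}ˣ` are the
`u` with `u ^ (r² - 1) = 1`; in the cyclic group `F_{r⁶}ˣ` of order `(r² - 1) m (r² + r + 1)` every
such `u` is an `m`-th power. As `F_{r²}` is closed under subtraction, all differences of distinct
elements of it are nonzero `m`-th powers.
-/

theorem add_one_mul_sq_sub_add_one (r : ℕ) : (r + 1) * (r ^ 2 - r + 1) = r ^ 3 + 1 := by
  zify [Nat.le_self_pow two_ne_zero r]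
  ring

theorem sq_sub_add_one_mul_sq_add_add_one (r : ℕ) :
    (r ^ 2 - r + 1) * (r ^ 2 + r + 1) = r ^ 4 + r ^ 2 + 1 := by
  zify [Nat.le_self_pow two_ne_zero r]
  ring

theorem pow_six_sub_one_eq (r : ℕ) : r ^ 6 - 1 = (r ^ 2 - 1) * (r ^ 4 + r ^ 2 + 1) := by
  rcases Nat.eq_zero_or_pos r with rfl | hr
  · rfl
  · zify [Nat.one_le_pow 2 r hr, Nat.one_le_pow 6 r hr]
    ring

theorem pow_six_sub_one_div_sq_sub_one {r : ℕ} (hr : 1 < r) :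
    (r ^ 6 - 1) / (r ^ 2 - 1) = r ^ 4 + r ^ 2 + 1 := by
  have : 1 < r ^ 2 := Nat.one_lt_pow two_ne_zero hr
  rw [pow_six_sub_one_eq, Nat.mul_div_cancel_left _ (by omega)]

theorem IsCyclic.exists_pow_eq_of_pow_eq_one {G : Type*} [Group G] [IsCyclic G] [Finite G]
    {u : G} {d m : ℕ} (hu : u ^ d = 1) (hdvd : d * m ∣ Nat.card G) : ∃ y, y ^ m = u := by
  obtain ⟨g, hg⟩ := IsCyclic.exists_generator (α := G)
  obtain ⟨k, rfl⟩ : ∃ k : ℕ, g ^ k = u := mem_powers_iff_mem_zpowers.mpr (hg u)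
  have hd : d ≠ 0 := by
    rintro rfl
    exact Nat.card_pos.ne' (Nat.eq_zero_of_zero_dvd (by simpa using hdvd))
  have hkd : d * m ∣ d * k := by
    rw [← orderOf_eq_card_of_forall_mem_zpowers hg] at hdvd
    exact hdvd.trans (orderOf_dvd_of_pow_eq_one (by rwa [mul_comm, pow_mul]))
  obtain ⟨j, rfl⟩ := Nat.dvd_of_mul_dvd_mul_left (Nat.pos_of_ne_zero hd) hkd
  exact ⟨g ^ j, by rw [← pow_mul, mul_comm]⟩

theorem FiniteField.exists_pow_eq_of_pow_eq_self {F : Type*} [Field F] [Finite F] {x : F}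
    (hx : x ≠ 0) {k m : ℕ} (hfix : x ^ k = x) (hdvd : (k - 1) * m ∣ Nat.card F - 1) :
    ∃ y : F, y ^ m = x := by
  have hu : Units.mk0 x hx ^ (k - 1) = 1 := by
    ext
    cases k with
    | zero => simp
    | succ k => simpa [pow_succ, hx] using hfix
  obtain ⟨y, hy⟩ := IsCyclic.exists_pow_eq_of_pow_eq_one hu (by rwa [Nat.card_units])
  exact ⟨y, by simpa using congrArg Units.val hy⟩

/-- Let `r` be an odd prime power, `q = r^3`, `m = r^2 - r + 1`. Then
`m ∣ q+1`, `m ∣ (r^6-1)/(r^2-1)`, every nonzero element of the subfield `F_{r^2}` of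
`F_{q^2} = F_{r^6}` is an `m`-th power, and `F_{r^2}` forms a clique in `GP(q^2,m)`. -/
theorem subfield_clique_counterexample
    (r : ℕ) (hr : ∃ p n : ℕ, p.Prime ∧ Odd p ∧ 0 < n ∧ r = p ^ n)
    (q m : ℕ) (hq : q = r ^ 3) (hm : m = r ^ 2 - r + 1)
    (F : Type*) [Field F] [Fintype F] (hF : Fintype.card F = q ^ 2) :
    m ∣ q + 1 ∧
    m ∣ (r ^ 6 - 1) / (r ^ 2 - 1) ∧
    (∀ x : F, x ≠ 0 → x ^ (r ^ 2) = x → ∃ y : F, y ^ m = x) ∧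
    (∀ x y : F, x ^ (r ^ 2) = x → y ^ (r ^ 2) = y → x ≠ y →
      ∃ z : F, z ≠ 0 ∧ z ^ m = x - y) := by
  obtain ⟨p, n, hp, -, hn, hr_def⟩ := hr
  subst hq hm
  have : Fact p.Prime := ⟨hp⟩
  have : CharP F p := charP_of_card_eq_prime_pow (f := n * 6) (by rw [hF, hr_def]; ring)
  have hr : 1 < r := hr_def ▸ Nat.one_lt_pow hn.ne' hp.one_lt
  have hpow (x : F) (hx : x ≠ 0) (hfix : x ^ (r ^ 2) = x) : ∃ y : F, y ^ (r ^ 2 - r + 1) = x := by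
    refine FiniteField.exists_pow_eq_of_pow_eq_self hx hfix ?_
    rw [Nat.card_eq_fintype_card, hF, ← pow_mul, pow_six_sub_one_eq,
      ← sq_sub_add_one_mul_sq_add_add_one]
    exact mul_dvd_mul_left _ (dvd_mul_right _ _)
  refine ⟨⟨r + 1, by rw [mul_comm, add_one_mul_sq_sub_add_one]⟩, ?_, hpow, ?_⟩
  · rw [pow_six_sub_one_div_sq_sub_one hr, ← sq_sub_add_one_mul_sq_add_add_one]
    exact dvd_mul_right _ _
  · intro x y hx hy hxy
    have hfix : (x - y) ^ (r ^ 2) = x - y := by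
      rw [hr_def, ← pow_mul] at hx hy ⊢
      rw [sub_pow_char_pow, hx, hy]
    obtain ⟨z, hz⟩ := hpow (x - y) (sub_ne_zero.mpr hxy) hfix
    exact ⟨z, ne_zero_pow (Nat.succ_ne_zero _) (hz ▸ sub_ne_zero.mpr hxy), hz⟩
end
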